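/- Let L ⊆ ℤ^n be a sublattice. The lattice ideal I_L = ⟨x^{u_+} - x^{u_-} : u ∈ L⟩ in ℂ[x_1,...,x_n] is prime if and only if L is saturated, i.e., L = (ℚL) ∩ ℤ^n. -/

import Mathlib

/-!
`I_L` is the kernel of `k[x] → k[ℤⁿ/L]`, `x^a ↦ t^[a]`: the kernel of a map of monoid algebras
induced by a monoid hom is spanned by the binomials `x^a - x^b` with `a`, `b` in one fibre, and
each of these is a monomial multiple of a generator `x^u₊ - x^u₋`. If `L` is saturated, `ℤⁿ/L` is
finitely generated and torsion-free, so its group algebra is a domain and `I_L` is prime.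
Conversely, if `m • u ∈ L` with `m ≠ 0` and `u ∉ L`, then
`x^(m u)₊ - x^(m u)₋ = (∑ x^(i u₊) x^((m-1-i) u₋)) (x^u₊ - x^u₋)` lies in `I_L`, but the first
factor takes the value `m ≠ 0` at `(1, …, 1)`, where `I_L` vanishes, and the second is not in
`I_L` since `u ∉ L`.
-/

open MvPolynomial

noncomputable def posPart {n : ℕ} (u : Fin n → ℤ) : Fin n →₀ ℕ :=
  Finsupp.equivFunOnFinite.symm fun i => (u i).toNat

namespace AddMonoidAlgebra

variable {k M N : Type*} [CommRing k] [AddMonoid M] [AddMonoid N]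

/-- For a section `s` of `f` over its range, `x - mapDomain (s ∘ f) x` is a combination of the
binomials, and `mapDomain (s ∘ f)` vanishes on the kernel. -/
theorem ker_mapDomainRingHom (f : M →+ N) :
    RingHom.ker (mapDomainRingHom k f) =
      Ideal.span {x | ∃ a b, f a = f b ∧ x = single a 1 - single b 1} := by
  refine le_antisymm ?_ (Ideal.span_le.mpr ?_)
  · set s := Function.invFun f
    have hs (a : M) : f (s (f a)) = f a := Function.invFun_eq ⟨a, rfl⟩
    have hmem (x : AddMonoidAlgebra k M) :
        x - mapDomain (s ∘ f) x ∈
          Ideal.span {x | ∃ a b, f a = f b ∧ x = single a 1 - single b 1} := by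
      induction x using induction_linear with
      | zero => simp
      | add x y hx hy =>
        rw [mapDomain_add, add_sub_add_comm]
        exact add_mem hx hy
      | single a r =>
        have : single a r - single (s (f a)) r = r • (single a (1 : k) - single (s (f a)) 1) := by
          rw [smul_sub, smul_single', mul_one, smul_single', mul_one]
        rw [mapDomain_single, Function.comp_apply, this]
        exact Submodule.smul_of_tower_mem _ r (Ideal.subset_span ⟨a, _, (hs a).symm, rfl⟩)
    intro x hx
    have hcomp : mapDomain (s ∘ f) x = mapDomain s (mapDomainRingHom k f x) := by
      ext; simp [Finsupp.mapDomain_comp]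
    simpa [hcomp, RingHom.mem_ker.mp hx] using hmem x
  · rintro _ ⟨a, b, hab, rfl⟩
    rw [SetLike.mem_coe, RingHom.mem_ker, map_sub, sub_eq_zero]
    simp [hab]

end AddMonoidAlgebra

def Submodule.IsSaturated {M : Type*} [AddCommGroup M] (L : Submodule ℤ M) : Prop :=
  ∀ (u : M) (c : ℤ), c ≠ 0 → c • u ∈ L → u ∈ L

theorem Submodule.IsSaturated.isAddTorsionFree_quotient {M : Type*} [AddCommGroup M]
    {L : Submodule ℤ M} (hL : L.IsSaturated) : IsAddTorsionFree (M ⧸ L) := by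
  refine Module.isTorsionFree_int_iff_isAddTorsionFree.mp (.of_smul_eq_zero fun c x hcx => ?_)
  induction x using Submodule.Quotient.induction_on
  rw [← Submodule.Quotient.mk_smul, Submodule.Quotient.mk_eq_zero] at hcx
  rw [Submodule.Quotient.mk_eq_zero, or_iff_not_imp_left]
  exact fun hc => hL _ c hc hcx

section LatticeIdeal

variable {n : ℕ} (k : Type*) [CommRing k] (L : Submodule ℤ (Fin n → ℤ))

noncomputable def intExponent : (Fin n →₀ ℕ) →+ (Fin n → ℤ) where
  toFun d i := d i
  map_zero' := by ext; simp
  map_add' a b := by ext; simp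

@[simp]
theorem intExponent_apply (d : Fin n →₀ ℕ) (i : Fin n) : intExponent d i = d i := rfl

@[simp]
theorem posPart_apply (u : Fin n → ℤ) (i : Fin n) : (posPart u : Fin n →₀ ℕ) i = (u i).toNat := rfl

theorem intExponent_posPart_sub_posPart_neg (u : Fin n → ℤ) :
    intExponent (n := n) (posPart u) - intExponent (posPart (-u)) = u := by
  ext i
  simp only [Pi.sub_apply, intExponent_apply, posPart_apply, Pi.neg_apply]
  omega

theorem posPart_nsmul (c : ℕ) (u : Fin n → ℤ) :
    (posPart (c • u) : Fin n →₀ ℕ) = c • (posPart u : Fin n →₀ ℕ) := by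
  ext i
  simp only [posPart_apply, Finsupp.smul_apply, Pi.smul_apply, smul_eq_mul]
  rw [nsmul_eq_mul]
  rcases le_total 0 (u i) with h | h
  · lift u i to ℕ using h with m
    norm_cast
  · rw [Int.toNat_of_nonpos h, mul_zero,
      Int.toNat_of_nonpos (mul_nonpos_of_nonneg_of_nonpos (Int.natCast_nonneg c) h)]

noncomputable def latticeIdeal : Ideal (MvPolynomial (Fin n) k) :=
  Ideal.span {f | ∃ u ∈ L, f = monomial (posPart u) 1 - monomial (posPart (-u)) 1}

noncomputable def latticeClass : (Fin n →₀ ℕ) →+ (Fin n → ℤ) ⧸ L :=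
  L.mkQ.toAddMonoidHom.comp intExponent

variable {k L}

theorem latticeClass_eq_iff {a b : Fin n →₀ ℕ} :
    latticeClass L a = latticeClass L b ↔ intExponent a - intExponent b ∈ L :=
  Submodule.Quotient.eq L

theorem monomial_sub_monomial_mem_latticeIdeal {a b : Fin n →₀ ℕ}
    (hab : intExponent a - intExponent b ∈ L) :
    monomial a (1 : k) - monomial b 1 ∈ latticeIdeal k L := by
  set u := intExponent a - intExponent b
  have ha : (posPart u : Fin n →₀ ℕ) + a ⊓ b = a := by
    ext i
    simp only [Finsupp.add_apply, Finsupp.inf_apply, posPart_apply, u, Pi.sub_apply,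
      intExponent_apply]
    omega
  have hb : (posPart (-u) : Fin n →₀ ℕ) + a ⊓ b = b := by
    ext i
    simp only [Finsupp.add_apply, Finsupp.inf_apply, posPart_apply, u, Pi.neg_apply,
      Pi.sub_apply, intExponent_apply]
    omega
  have hfactor : monomial a (1 : k) - monomial b 1 =
      (monomial (posPart u) 1 - monomial (posPart (-u)) 1) * monomial (a ⊓ b) 1 := by
    rw [sub_mul, monomial_mul, monomial_mul, one_mul, ha, hb]
  rw [hfactor]
  exact Ideal.mul_mem_right _ _ (Ideal.subset_span ⟨u, hab, rfl⟩)

theorem latticeIdeal_eq_ker :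
    latticeIdeal k L = RingHom.ker (AddMonoidAlgebra.mapDomainRingHom k (latticeClass L)) := by
  rw [AddMonoidAlgebra.ker_mapDomainRingHom]
  refine le_antisymm (Ideal.span_le.mpr ?_) (Ideal.span_le.mpr ?_)
  · rintro _ ⟨u, hu, rfl⟩
    refine Ideal.subset_span ⟨posPart u, posPart (-u), ?_, rfl⟩
    rwa [latticeClass_eq_iff, intExponent_posPart_sub_posPart_neg]
  · rintro _ ⟨a, b, hab, rfl⟩
    exact monomial_sub_monomial_mem_latticeIdeal (latticeClass_eq_iff.mp hab)

theorem isPrime_latticeIdeal [IsDomain k] (hL : L.IsSaturated) : (latticeIdeal k L).IsPrime := by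
  have := hL.isAddTorsionFree_quotient
  have : AddMonoid.FG ((Fin n → ℤ) ⧸ L) :=
    AddGroup.fg_iff_addMonoid_fg.mp (Module.Finite.iff_addGroup_fg.mp inferInstance)
  rw [latticeIdeal_eq_ker]
  exact RingHom.ker_isPrime _

variable (k L) in
theorem latticeIdeal_le_ker_eval_one : latticeIdeal k L ≤ RingHom.ker (eval (1 : Fin n → k)) := by
  refine Ideal.span_le.mpr ?_
  rintro _ ⟨u, -, rfl⟩
  simp [eval_monomial]

theorem binomial_mem_latticeIdeal_iff [Nontrivial k] {u : Fin n → ℤ} :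
    monomial (posPart u) (1 : k) - monomial (posPart (-u)) 1 ∈ latticeIdeal k L ↔ u ∈ L := by
  refine ⟨fun h => ?_, fun hu => Ideal.subset_span ⟨u, hu, rfl⟩⟩
  rw [latticeIdeal_eq_ker, RingHom.mem_ker, map_sub, sub_eq_zero, ← single_eq_monomial,
    ← single_eq_monomial] at h
  simp only [AddMonoidAlgebra.mapDomainRingHom_apply, AddMonoidAlgebra.mapDomain_single] at h
  rwa [AddMonoidAlgebra.single_left_inj one_ne_zero, latticeClass_eq_iff,
    intExponent_posPart_sub_posPart_neg] at h

theorem isSaturated_of_isPrime_latticeIdeal [IsDomain k] [CharZero k]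
    (hL : (latticeIdeal k L).IsPrime) : L.IsSaturated := by
  intro u c hc hcu
  obtain ⟨m, hm, hmu⟩ : ∃ m : ℕ, m ≠ 0 ∧ m • u ∈ L := by
    obtain ⟨m, rfl | rfl⟩ := Int.eq_nat_or_neg c
    · exact ⟨m, by simpa using hc, by simpa using hcu⟩
    · exact ⟨m, by simpa using hc, by simpa using neg_mem hcu⟩
  set x := monomial (posPart u) (1 : k)
  set y := monomial (posPart (-u)) (1 : k)
  have hpow : x ^ m - y ^ m ∈ latticeIdeal k L := by
    rw [monomial_pow, monomial_pow, one_pow, ← posPart_nsmul, ← posPart_nsmul, smul_neg]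
    exact binomial_mem_latticeIdeal_iff.mpr hmu
  rw [← geom_sum₂_mul] at hpow
  refine binomial_mem_latticeIdeal_iff.mp ((hL.mem_or_mem hpow).resolve_left fun hsum => hm ?_)
  simpa [x, y, eval_monomial] using latticeIdeal_le_ker_eval_one k L hsum

theorem isPrime_latticeIdeal_iff [IsDomain k] [CharZero k] :
    (latticeIdeal k L).IsPrime ↔ L.IsSaturated :=
  ⟨isSaturated_of_isPrime_latticeIdeal, isPrime_latticeIdeal⟩

end LatticeIdeal

/-- The lattice ideal `I_L = ⟨x^{u₊} - x^{u₋} : u ∈ L⟩` of a sublattice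
`L ⊆ ℤ^n` is prime if and only if `L` is saturated, i.e. `L = (ℚL) ∩ ℤ^n`. -/
theorem lattice_ideal_prime_iff_saturated {n : ℕ}
    (L : Submodule ℤ (Fin n → ℤ)) :
    (Ideal.span {f : MvPolynomial (Fin n) ℂ | ∃ u ∈ L,
        f = monomial (posPart u) 1 - monomial (posPart (-u)) 1}).IsPrime ↔
    (∀ (u : Fin n → ℤ) (c : ℤ), c ≠ 0 → c • u ∈ L → u ∈ L) :=
  isPrime_latticeIdeal_iff
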